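/- arXiv:2406.19163 — 2 statements merged into one kernel-verified Lean document; each statement's English description precedes it below -/
import Mathlib

section
/- Let R be a commutative ring, let r ∈ R be a non-zero-divisor such that R is r-adically complete, and let n be a positive integer. Let R' = R[X]/(X^n − r) and let θ ∈ R' denote the class of X. Consider the ring homomorphism Φ : HahnSeries ℚ R → HahnSeries ℚ R' which sends a Hahn series Σ a_i T^i to Σ (a_i image in R') T^{n·i} (i.e., the composition of the coefficientwise map induced by R → R' with the exponent-rescaling embedding along multiplication by n on ℚ). Then Φ maps the ideal generated by (single 1 1) − C r into the ideal generated by (single 1 1) − C θ, and the induced ring homomorphism (HahnSeries ℚ R)/((single 1 1) − C r) → (HahnSeries ℚ R')/((single 1 1) − C θ) is an isomorphism. -/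
noncomputable section

/-- The ring homomorphism between Hahn series rings induced by applying a ring homomorphism to
every coefficient. -/
def HahnSeries.mapRingHom {Γ R S : Type*} [AddCommMonoid Γ] [LinearOrder Γ] [IsOrderedCancelAddMonoid Γ]
    [CommRing R] [CommRing S] (f : R →+* S) : HahnSeries Γ R →+* HahnSeries Γ S where
  toFun x := x.map f
  map_zero' := by ext; simp
  map_one' := by ext g; by_cases h : g = 0 <;> simp [h]
  map_add' x y := HahnSeries.map_add (f : R →+ S)
  map_mul' x y := HahnSeries.map_mul (f : R →ₙ+* S)

/-- The exponent-rescaling ring embedding of `HahnSeries ℚ R`, sending `Σ a_i T^i` to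
`Σ a_i T^(n·i)`, for a positive integer `n`. -/
def HahnSeries.expRescale (R : Type*) [CommRing R] (n : ℕ) (hn : 0 < n) :
    HahnSeries ℚ R →+* HahnSeries ℚ R :=
  HahnSeries.embDomainRingHom (AddMonoidHom.mulLeft (n : ℚ))
    (mul_right_injective₀ (by exact_mod_cast hn.ne'))
    (fun g g' => by
      have hn' : (0 : ℚ) < n := by exact_mod_cast hn
      show (n : ℚ) * g ≤ n * g' ↔ g ≤ g'
      exact ⟨fun h => le_of_mul_le_mul_left h hn', fun h => mul_le_mul_of_nonneg_left h hn'.le⟩)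

/-! Coefficientwise, the power basis `1, θ, …, θ^(n-1)` of `R'` over `R` shows that evaluation
at `C θ` identifies `HahnSeries ℚ R'` with `(HahnSeries ℚ R)[X] ⧸ (Xⁿ - C r)`. Rescaling exponents
by `n` is an automorphism fixing `C θ` and sending `s = T^(1/n)` to `T`, so `Φ` is again such a
presentation. For any presentation `B = A[X] ⧸ (g)` with `X ↦ θ`, reducing `X` to `s` gives
`A ⧸ (g(s)) ≃ B ⧸ (s - θ)`, and here `g(s) = sⁿ - r = T - r`. -/

open Polynomial

theorem exists_bijective_quotientMap_of_ker_eval₂ {A B : Type*} [CommRing A] [CommRing B]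
    (f : A →+* B) (θ : B) (g : A[X]) (s : A) (hsurj : Function.Surjective (eval₂RingHom f θ))
    (hker : RingHom.ker (eval₂RingHom f θ) = Ideal.span {g}) :
    ∃ h : Ideal.span {g.eval s} ≤ (Ideal.span {f s - θ}).comap f,
      Function.Bijective (Ideal.quotientMap (Ideal.span {f s - θ}) f h) := by
  have hcong (p : A[X]) : f (p.eval s) - p.eval₂ f θ ∈ Ideal.span {f s - θ} := by
    rw [Ideal.mem_span_singleton, ← eval₂_at_apply, ← eval_map, ← eval_map]
    exact sub_dvd_eval_sub _ _ _
  have hg : g.eval₂ f θ = 0 := by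
    rw [← coe_eval₂RingHom, ← RingHom.mem_ker, hker]
    exact Ideal.mem_span_singleton_self g
  have hle : Ideal.span {g.eval s} ≤ (Ideal.span {f s - θ}).comap f := by
    rw [Ideal.span_singleton_le_iff_mem, Ideal.mem_comap]
    simpa [hg] using hcong g
  refine ⟨hle, Ideal.quotientMap_injective' fun y hy => ?_, fun b => ?_⟩
  · obtain ⟨z, hz⟩ := Ideal.mem_span_singleton'.mp (Ideal.mem_comap.mp hy)
    obtain ⟨p, rfl⟩ := hsurj z
    rw [coe_eval₂RingHom] at hz
    -- `y - (s - X) p` vanishes at `θ`, so it is a multiple of `g`; now evaluate at `s`.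
    have hmem : C y - (C s - X) * p ∈ RingHom.ker (eval₂RingHom f θ) := by
      simp [hz, mul_comm]
    rw [hker, Ideal.mem_span_singleton] at hmem
    obtain ⟨q, hq⟩ := hmem
    have hys := congrArg (eval s) hq
    simp only [eval_sub, eval_C, eval_mul, eval_X, sub_self, zero_mul, sub_zero] at hys
    exact Ideal.mem_span_singleton.mpr ⟨q.eval s, hys⟩
  · obtain ⟨b, rfl⟩ := Ideal.Quotient.mk_surjective b
    obtain ⟨p, rfl⟩ := hsurj b
    exact ⟨Ideal.Quotient.mk _ (p.eval s), by
      rw [Ideal.quotientMap_mk, Ideal.Quotient.eq]; exact hcong p⟩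

namespace HahnSeries

section MapRingHom

variable {Γ R S : Type*} [AddCommMonoid Γ] [LinearOrder Γ] [IsOrderedCancelAddMonoid Γ]
  [CommRing R] [CommRing S]

theorem coeff_mapRingHom (f : R →+* S) (x : HahnSeries Γ R) (q : Γ) :
    (mapRingHom f x).coeff q = f (x.coeff q) :=
  rfl

theorem mapRingHom_single (f : R →+* S) (q : Γ) (a : R) :
    mapRingHom f (single q a) = single q (f a) :=
  HahnSeries.map_single (f : R →+ S).toZeroHom

variable [Algebra R S] (pb : PowerBasis R S)

theorem coeff_sum_mapRingHom_mul_C_gen_pow (c : Fin pb.dim → HahnSeries Γ R) (q : Γ) :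
    (∑ i, mapRingHom (algebraMap R S) (c i) * HahnSeries.C pb.gen ^ (i : ℕ)).coeff q =
      ∑ i, (c i).coeff q • pb.basis i := by
  simp [coeff_sum, C_apply, coeff_mul_single_zero, coeff_mapRingHom, pb.basis_eq_pow,
    Algebra.smul_def]

theorem eval₂_mapRingHom_C_gen_surjective :
    Function.Surjective
      (eval₂RingHom (mapRingHom (Γ := Γ) (algebraMap R S)) (HahnSeries.C pb.gen)) := by
  intro x
  refine ⟨∑ i : Fin pb.dim, monomial i (x.map (pb.basis.coord i)), ?_⟩
  ext q
  simp only [coe_eval₂RingHom, eval₂_finsetSum, eval₂_monomial,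
    coeff_sum_mapRingHom_mul_C_gen_pow]
  simpa using pb.basis.sum_repr (x.coeff q)

theorem eq_zero_of_eval₂_mapRingHom_C_gen_eq_zero {P : (HahnSeries Γ R)[X]}
    (hdeg : P.natDegree < pb.dim)
    (hP : P.eval₂ (mapRingHom (algebraMap R S)) (HahnSeries.C pb.gen) = 0) :
    P = 0 := by
  rw [eval₂_eq_sum_range' _ hdeg, Finset.sum_range] at hP
  have hlow (i : Fin pb.dim) : P.coeff i = 0 := by
    ext q
    have hq := congrArg (coeff · q) hP
    simp only [coeff_sum_mapRingHom_mul_C_gen_pow, coeff_zero] at hq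
    exact Fintype.linearIndependent_iff.1 pb.basis.linearIndependent _ hq i
  refine Polynomial.ext fun i => ?_
  rcases lt_or_ge i pb.dim with hi | hi
  · exact hlow ⟨i, hi⟩
  · exact coeff_eq_zero_of_natDegree_lt (hdeg.trans_le hi)

theorem ker_eval₂_mapRingHom_C_gen {g : R[X]} (hg : g.Monic) (hdeg : g.natDegree = pb.dim)
    (hroot : aeval pb.gen g = 0) :
    RingHom.ker (eval₂RingHom (mapRingHom (Γ := Γ) (algebraMap R S)) (HahnSeries.C pb.gen)) =
      Ideal.span {g.map HahnSeries.C} := by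
  have hgC : (g.map HahnSeries.C).eval₂ (mapRingHom (Γ := Γ) (algebraMap R S))
      (HahnSeries.C pb.gen) = 0 := by
    rw [eval₂_map, show (mapRingHom (algebraMap R S)).comp HahnSeries.C =
      HahnSeries.C.comp (algebraMap R S) from RingHom.ext fun a => map_C a _, ← hom_eval₂,
      ← aeval_def, hroot, map_zero]
  have hmonic : (g.map (HahnSeries.C (Γ := Γ))).Monic := hg.map _
  refine le_antisymm (fun P hP => ?_) ((Ideal.span_singleton_le_iff_mem _).mpr hgC)
  rcases eq_or_ne (g.map (HahnSeries.C (Γ := Γ))) 1 with h1 | h1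
  · simp [h1]
  rw [Ideal.mem_span_singleton, ← modByMonic_eq_zero_iff_dvd hmonic]
  refine eq_zero_of_eval₂_mapRingHom_C_gen_eq_zero pb ?_ ?_
  · have hC : Function.Injective (HahnSeries.C : R →+* HahnSeries Γ R) := C_injective
    simpa [natDegree_map_eq_of_injective hC, hdeg] using natDegree_modByMonic_lt P hmonic h1
  · rw [RingHom.mem_ker, coe_eval₂RingHom] at hP
    rw [modByMonic_eq_sub_mul_div, eval₂_sub, eval₂_mul, hP, hgC, zero_mul, sub_zero]

end MapRingHom

section ExpRescale

variable {R : Type*} [CommRing R] {n : ℕ} (hn : 0 < n)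

theorem expRescale_coeff_natCast_mul (x : HahnSeries ℚ R) (q : ℚ) :
    (expRescale R n hn x).coeff (n * q) = x.coeff q :=
  embDomain_coeff

theorem expRescale_single (q : ℚ) (a : R) :
    expRescale R n hn (single q a) = single (n * q) a :=
  embDomain_single

theorem expRescale_C (a : R) : expRescale R n hn (HahnSeries.C a) = HahnSeries.C a :=
  embDomainRingHom_C

theorem expRescale_bijective : Function.Bijective (expRescale R n hn) := by
  have hn' : (0 : ℚ) < n := by exact_mod_cast hn
  refine ⟨embDomain_injective, fun y => ?_⟩
  refine ⟨embDomain (OrderIso.mulLeft₀ _ (inv_pos.2 hn')).toOrderEmbedding y, ?_⟩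
  ext q
  obtain ⟨p, rfl⟩ : ∃ p : ℚ, n * p = q := ⟨(n : ℚ)⁻¹ * q, by field_simp⟩
  rw [expRescale_coeff_natCast_mul]
  convert embDomain_coeff (a := (n : ℚ) * p) using 2
  simp [hn'.ne']

theorem exists_bijective_quotientMap_expRescale_comp_mapRingHom {g : R[X]} (hg : g.Monic) :
    ∃ h : Ideal.span {(g.map HahnSeries.C).eval (single (n : ℚ)⁻¹ 1)} ≤
        (Ideal.span {single 1 1 - HahnSeries.C (AdjoinRoot.root g)}).comap
          ((expRescale _ n hn).comp (mapRingHom (AdjoinRoot.of g))),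
      Function.Bijective (Ideal.quotientMap _
          ((expRescale _ n hn).comp (mapRingHom (AdjoinRoot.of g))) h) := by
  let pb := AdjoinRoot.powerBasis' hg
  have hn' : (n : ℚ) ≠ 0 := by exact_mod_cast hn.ne'
  have heval₂ : eval₂RingHom ((expRescale _ n hn).comp (mapRingHom (AdjoinRoot.of g)))
      (HahnSeries.C (AdjoinRoot.root g)) = (expRescale _ n hn).comp
        (eval₂RingHom (mapRingHom (algebraMap R _)) (HahnSeries.C pb.gen)) := by
    refine RingHom.ext fun p => ?_
    rw [RingHom.comp_apply, coe_eval₂RingHom, coe_eval₂RingHom, hom_eval₂, expRescale_C]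
    rfl
  have hs : (expRescale _ n hn).comp (mapRingHom (AdjoinRoot.of g)) (single (n : ℚ)⁻¹ 1) =
      single 1 1 := by
    rw [RingHom.comp_apply, mapRingHom_single, map_one, expRescale_single, mul_inv_cancel₀ hn']
  have key := exists_bijective_quotientMap_of_ker_eval₂
    ((expRescale _ n hn).comp (mapRingHom (AdjoinRoot.of g))) (HahnSeries.C (AdjoinRoot.root g))
    (g.map HahnSeries.C) (single (n : ℚ)⁻¹ 1)
    (by
      rw [heval₂]
      exact (expRescale_bijective hn).2.comp (eval₂_mapRingHom_C_gen_surjective pb))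
    (by rw [heval₂, RingHom.ker_comp_of_injective _ (expRescale_bijective hn).1,
      ker_eval₂_mapRingHom_C_gen pb hg rfl (AdjoinRoot.aeval_eq g ▸ AdjoinRoot.mk_self)])
  rwa [hs] at key

end ExpRescale

end HahnSeries

theorem quotient_iso_of_adjoin_nth_root_general {R : Type*} [CommRing R] (r : R)
    (n : ℕ) (hn : 0 < n)
    (Φ : HahnSeries ℚ R →+* HahnSeries ℚ (AdjoinRoot (Polynomial.X ^ n - Polynomial.C r)))
    (hΦ : Φ = (HahnSeries.expRescale (AdjoinRoot (Polynomial.X ^ n - Polynomial.C r)) n hn).comp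
      (HahnSeries.mapRingHom (AdjoinRoot.of (Polynomial.X ^ n - Polynomial.C r)))) :
    ∃ h : Ideal.span {HahnSeries.single (1 : ℚ) (1 : R) - HahnSeries.C r} ≤
        Ideal.comap Φ (Ideal.span
          {HahnSeries.single (1 : ℚ) (1 : AdjoinRoot (Polynomial.X ^ n - Polynomial.C r)) -
            HahnSeries.C (AdjoinRoot.root (Polynomial.X ^ n - Polynomial.C r))}),
      Function.Bijective
        (Ideal.quotientMap
          (Ideal.span
            {HahnSeries.single (1 : ℚ) (1 : AdjoinRoot (Polynomial.X ^ n - Polynomial.C r)) -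
              HahnSeries.C (AdjoinRoot.root (Polynomial.X ^ n - Polynomial.C r))})
          Φ h) := by
  have heval : ((X ^ n - Polynomial.C r).map HahnSeries.C).eval
      (HahnSeries.single (n : ℚ)⁻¹ (1 : R)) = HahnSeries.single 1 1 - HahnSeries.C r := by
    have hn' : (n : ℚ) ≠ 0 := by exact_mod_cast hn.ne'
    simp [HahnSeries.single_pow, hn']
  subst hΦ
  have key := HahnSeries.exists_bijective_quotientMap_expRescale_comp_mapRingHom hn
    (monic_X_pow_sub_C r hn.ne')
  rwa [heval] at key

/-- Let `r` be a non-zero-divisor in an `r`-adically complete commutative ring `R`, let `n > 0`,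
let `R' = R[X]/(Xⁿ - r)` with `θ` the class of `X`, and let `Φ : HahnSeries ℚ R → HahnSeries ℚ R'`
send `Σ a_i T^i` to `Σ a_i T^(n·i)` (coefficients mapped along `R → R'`). Then `Φ` maps the ideal
`(single 1 1 - C r)` into the ideal `(single 1 1 - C θ)`, and the induced map on quotients is a
ring isomorphism. -/
theorem quotient_iso_of_adjoin_nth_root {R : Type*} [CommRing R] (r : R)
    (hr : r ∈ nonZeroDivisors R) (hcomplete : IsAdicComplete (Ideal.span {r}) R)
    (n : ℕ) (hn : 0 < n)
    (Φ : HahnSeries ℚ R →+* HahnSeries ℚ (AdjoinRoot (Polynomial.X ^ n - Polynomial.C r)))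
    (hΦ : Φ = (HahnSeries.expRescale (AdjoinRoot (Polynomial.X ^ n - Polynomial.C r)) n hn).comp
      (HahnSeries.mapRingHom (AdjoinRoot.of (Polynomial.X ^ n - Polynomial.C r)))) :
    ∃ h : Ideal.span {HahnSeries.single (1 : ℚ) (1 : R) - HahnSeries.C r} ≤
        Ideal.comap Φ (Ideal.span
          {HahnSeries.single (1 : ℚ) (1 : AdjoinRoot (Polynomial.X ^ n - Polynomial.C r)) -
            HahnSeries.C (AdjoinRoot.root (Polynomial.X ^ n - Polynomial.C r))}),
      Function.Bijective
        (Ideal.quotientMap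
          (Ideal.span
            {HahnSeries.single (1 : ℚ) (1 : AdjoinRoot (Polynomial.X ^ n - Polynomial.C r)) -
              HahnSeries.C (AdjoinRoot.root (Polynomial.X ^ n - Polynomial.C r))})
          Φ h) :=
  quotient_iso_of_adjoin_nth_root_general r n hn Φ hΦ

end
end

section
/- Let F be a field of characteristic p, let q = p^e with e ≥ 1, and define f : HahnSeries ℚ F → HahnSeries ℚ F by f(x) = x^q − (single 1 1)·x, with f^{[m]} its m-th iterate (f^{[0]} = id). For n ≥ 1 let y_n ∈ HahnSeries ℚ F be the Hahn series with coefficient 1 at each rational of the form 1/(q−1) − q^{−k_1} − ⋯ − q^{−k_{n−1}} (0 < k_1 < ⋯ < k_{n−1} integers) and 0 elsewhere. Then f^{[n]}(y_n) = 0 and f^{[n−1]}(y_n) ≠ 0; moreover (f^{[n−1]}(y_n))^{q−1} = single 1 1, i.e., y_n is a root of g_n(X) = (f^{[n−1]}(X))^{q−1} − T, a primitive π^n-torsion point of the Lubin–Tate formal module for the uniformizer −T. -/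
noncomputable section

/-- The set `A_n ⊆ ℚ` of rationals of the form `1/(q-1) - q^{-k_1} - ⋯ - q^{-k_{n-1}}`
with `0 < k_1 < ⋯ < k_{n-1}` integers (so `A_1 = {1/(q-1)}`). -/
def lubinTateExpSet (q n : ℕ) : Set ℚ :=
  {x | ∃ κ : Fin (n - 1) → ℕ, StrictMono κ ∧ (∀ j, 0 < κ j) ∧
    x = 1 / ((q : ℚ) - 1) - ∑ j, (q : ℚ) ^ (-(κ j : ℤ))}

/-- The Lubin-Tate map `f(x) = x^q - T·x` on `HahnSeries ℚ F`, where `T = single 1 1`. -/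
def lubinTateMap (F : Type*) [Field F] (q : ℕ) :
    HahnSeries ℚ F → HahnSeries ℚ F :=
  fun x => x ^ q - HahnSeries.single (1 : ℚ) 1 * x

/-!
In characteristic `p`, raising to the power `q = p^e` acts on Hahn series coefficientwise:
the coefficient of `x^q` at `g` is `(x.coeff (g/q))^q`. Hence if `x` has coefficient `1` on a
set `A` and `0` elsewhere, then `f(x)` has coefficient `𝟙_A(g/q) - 𝟙_A(g-1)` at `g`.

Write `A_{m+1} = {c - Σ_{k ∈ S} q^{-(k+1)} : #S = m}` with `c = 1/(q-1)`. Since `q c = 1 + c`,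
multiplying by `q` and splitting according to whether `0 ∈ S` gives
`q A_{m+1} = (1 + A_{m+1}) ∪ A_m` for `m ≥ 1` and `q A_1 = 1 + A_1`, and the union is disjoint
because every `A_m` lies in `(0, c]` with `c ≤ 1`. So `f(y_{m+1}) = y_m` and `f(y_1) = 0`,
while `y_1 = T^{1/(q-1)}` has `(q-1)`-st power `T`.
-/

namespace HahnSeries

variable {Γ R : Type*} [AddCommMonoid Γ] [LinearOrder Γ] [IsOrderedCancelAddMonoid Γ]

theorem support_pow_succ_subset_Iio [Semiring R] {x : HahnSeries Γ R} {c : Γ}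
    (hx : x.support ⊆ Set.Iio c) (n : ℕ) : (x ^ (n + 1)).support ⊆ Set.Iio ((n + 1) • c) := by
  induction n with
  | zero => simpa using hx
  | succ n ih =>
    rw [pow_succ, succ_nsmul]
    refine support_mul_subset.trans ?_
    rintro _ ⟨a, ha, b, hb, rfl⟩
    exact add_lt_add (ih ha) (hx hb)

theorem support_pow_succ_subset_Ioi [Semiring R] {x : HahnSeries Γ R} {c : Γ}
    (hx : x.support ⊆ Set.Ioi c) (n : ℕ) : (x ^ (n + 1)).support ⊆ Set.Ioi ((n + 1) • c) := by
  induction n with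
  | zero => simpa using hx
  | succ n ih =>
    rw [pow_succ, succ_nsmul]
    refine support_mul_subset.trans ?_
    rintro _ ⟨a, ha, b, hb, rfl⟩
    exact add_lt_add (ih ha) (hx hb)

theorem coeff_pow_expChar_pow_nsmul [CommRing R] (p e : ℕ) [ExpChar R p] (x : HahnSeries Γ R)
    (c : Γ) : (x ^ p ^ e).coeff (p ^ e • c) = x.coeff c ^ p ^ e := by
  have : ExpChar (HahnSeries Γ R) p := expChar_of_injective_ringHom C_injective p
  set w := truncLT c x
  set v := x - w - single c (x.coeff c)
  have hw : w.support ⊆ Set.Iio c := fun a ha => by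
    by_contra hac
    exact ha (coeff_truncLT_of_le (not_lt.mp hac) x)
  have hv : v.support ⊆ Set.Ioi c := fun a ha => by
    by_contra hac
    rcases (not_lt.mp hac).lt_or_eq with hac | rfl
    · exact ha (by simp [v, w, coeff_truncLT_of_lt hac, coeff_single_of_ne hac.ne])
    · exact ha (by simp [v, w])
  obtain ⟨n, hn⟩ : ∃ n, p ^ e = n + 1 :=
    Nat.exists_eq_succ_of_ne_zero (pow_ne_zero _ (expChar_ne_zero R p))
  have hwq : (w ^ p ^ e).coeff (p ^ e • c) = 0 := by
    by_contra h
    rw [hn] at h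
    exact lt_irrefl _ (support_pow_succ_subset_Iio hw n h)
  have hvq : (v ^ p ^ e).coeff (p ^ e • c) = 0 := by
    by_contra h
    rw [hn] at h
    exact lt_irrefl _ (support_pow_succ_subset_Ioi hv n h)
  calc (x ^ p ^ e).coeff (p ^ e • c)
      = ((w + single c (x.coeff c) + v) ^ p ^ e).coeff (p ^ e • c) := by
        congr; simp only [v]; abel
    _ = x.coeff c ^ p ^ e := by
        rw [add_pow_expChar_pow, add_pow_expChar_pow, single_pow, coeff_add, coeff_add,
          coeff_single_same, hwq, hvq, zero_add, add_zero]

theorem single_div_pow {R : Type*} [Semiring R] {n : ℕ} (hn : n ≠ 0) (a : ℚ) :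
    single (a / n) (1 : R) ^ n = single a 1 := by
  rw [single_pow, one_pow, nsmul_eq_mul, mul_div_cancel₀ _ (Nat.cast_ne_zero.mpr hn)]

end HahnSeries

open Finset

theorem Finset.Nat.exists_eq_map_succ_or_eq_insert_zero (S : Finset ℕ) :
    ∃ T : Finset ℕ,
      S = T.map (addRightEmbedding 1) ∨ S = insert 0 (T.map (addRightEmbedding 1)) := by
  refine ⟨S.preimage (· + 1) (add_left_injective 1).injOn, ?_⟩
  by_cases h0 : 0 ∈ S
  · right; ext k; cases k <;> simp [h0]
  · left; ext k; cases k <;> simp [h0]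

theorem Finset.Nat.exists_card_sum_eq_iff {M : Type*} [AddCommMonoid M] (f : ℕ → M) (m : ℕ)
    (a : M) :
    (∃ S : Finset ℕ, #S = m ∧ ∑ k ∈ S, f k = a) ↔
      (∃ T : Finset ℕ, #T = m ∧ ∑ k ∈ T, f (k + 1) = a) ∨
      (∃ T : Finset ℕ, #T + 1 = m ∧ f 0 + ∑ k ∈ T, f (k + 1) = a) := by
  constructor
  · rintro ⟨S, rfl, rfl⟩
    obtain ⟨T, rfl | rfl⟩ := Finset.Nat.exists_eq_map_succ_or_eq_insert_zero S
    · exact Or.inl ⟨T, (card_map _).symm, by simp⟩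
    · exact Or.inr ⟨T, by simp, by simp⟩
  · rintro (⟨T, rfl, rfl⟩ | ⟨T, rfl, rfl⟩)
    · exact ⟨_, card_map (addRightEmbedding 1), by simp⟩
    · exact ⟨insert 0 (T.map (addRightEmbedding 1)), by simp, by simp⟩

theorem mem_lubinTateExpSet_succ_iff {q m : ℕ} {x : ℚ} :
    x ∈ lubinTateExpSet q (m + 1) ↔
      ∃ S : Finset ℕ, #S = m ∧ x = 1 / ((q : ℚ) - 1) - ∑ k ∈ S, (q : ℚ)⁻¹ ^ (k + 1) := by
  have hpow (k : ℕ) : (q : ℚ) ^ (-(k : ℤ)) = (q : ℚ)⁻¹ ^ k := by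
    rw [zpow_neg, zpow_natCast, inv_pow]
  constructor
  · rintro ⟨κ, hκ, hκ_pos, rfl⟩
    have hinj : Function.Injective (fun j => κ j - 1) := fun i j hij =>
      hκ.injective (by have := hκ_pos i; have := hκ_pos j; simp only at hij; omega)
    refine ⟨univ.image (fun j => κ j - 1), by rw [card_image_of_injective _ hinj]; simp, ?_⟩
    rw [sum_image fun i _ j _ hij => hinj hij]
    simp only [Nat.sub_add_cancel (hκ_pos _), hpow]
  · rintro ⟨S, hS, rfl⟩
    let κ := S.orderEmbOfFin hS
    have hsum := sum_image (f := fun k => (q : ℚ)⁻¹ ^ (k + 1)) (s := univ) fun i _ j _ hij =>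
      κ.injective hij
    rw [S.image_orderEmbOfFin_univ hS] at hsum
    refine ⟨fun j => κ j + 1, κ.strictMono.add_const 1, fun j => Nat.succ_pos _, ?_⟩
    rw [hsum]
    simp only [hpow]
    rfl

theorem sum_inv_pow_succ_lt {q : ℕ} (hq : 2 ≤ q) (S : Finset ℕ) :
    ∑ k ∈ S, (q : ℚ)⁻¹ ^ (k + 1) < 1 / ((q : ℚ) - 1) := by
  set r := (q : ℚ)⁻¹
  have hq1 : (0 : ℚ) < q - 1 := by rw [sub_pos]; exact_mod_cast hq
  have hqr : (q : ℚ) * r = 1 := mul_inv_cancel₀ (by positivity)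
  obtain ⟨N, hN⟩ := S.exists_nat_subset_range
  have hgeom : ((q : ℚ) - 1) * ∑ k ∈ range N, r ^ (k + 1) = 1 - r ^ N := by
    simp only [pow_succ, ← sum_mul]
    linear_combination (∑ k ∈ range N, r ^ k) * hqr - geom_sum_mul r N
  have hle : ∑ k ∈ S, r ^ (k + 1) ≤ ∑ k ∈ range N, r ^ (k + 1) :=
    sum_le_sum_of_subset_of_nonneg hN fun _ _ _ => by positivity
  rw [lt_div_iff₀ hq1]
  nlinarith [mul_le_mul_of_nonneg_left hle hq1.le, pow_pos (show 0 < r by positivity) N]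

theorem lubinTateExpSet_succ_subset_Ioc {q : ℕ} (hq : 2 ≤ q) (m : ℕ) :
    lubinTateExpSet q (m + 1) ⊆ Set.Ioc 0 (1 / ((q : ℚ) - 1)) := by
  intro x hx
  obtain ⟨S, -, rfl⟩ := mem_lubinTateExpSet_succ_iff.mp hx
  exact ⟨sub_pos.mpr (sum_inv_pow_succ_lt hq S),
    sub_le_self _ (sum_nonneg fun _ _ => by positivity)⟩

theorem notMem_lubinTateExpSet_of_sub_one_mem {q : ℕ} (hq : 2 ≤ q) {m k : ℕ} {g : ℚ}
    (h : g - 1 ∈ lubinTateExpSet q (m + 1)) : g ∉ lubinTateExpSet q (k + 1) := by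
  intro hg
  have hc : 1 / ((q : ℚ) - 1) ≤ 1 := by
    rw [div_le_one (by rw [sub_pos]; exact_mod_cast hq)]
    linarith [show (2 : ℚ) ≤ q by exact_mod_cast hq]
  linarith [(lubinTateExpSet_succ_subset_Ioc hq m h).1, (lubinTateExpSet_succ_subset_Ioc hq k hg).2]

theorem lubinTateExpSet_one (q : ℕ) : lubinTateExpSet q 1 = {1 / ((q : ℚ) - 1)} := by
  ext x
  simp [mem_lubinTateExpSet_succ_iff (m := 0)]

theorem div_mem_lubinTateExpSet_succ_iff {q : ℕ} (hq : 2 ≤ q) (m : ℕ) (g : ℚ) :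
    g / q ∈ lubinTateExpSet q (m + 1) ↔
      g - 1 ∈ lubinTateExpSet q (m + 1) ∨ (m ≠ 0 ∧ g ∈ lubinTateExpSet q m) := by
  have hq0 : (q : ℚ) ≠ 0 := by positivity
  have hqc : (q : ℚ) * (1 / ((q : ℚ) - 1)) = 1 + 1 / ((q : ℚ) - 1) := by
    have : (q : ℚ) - 1 ≠ 0 := by rw [sub_ne_zero]; exact_mod_cast (by omega : q ≠ 1)
    field_simp
    ring
  have hscale (S : Finset ℕ) : g / q = 1 / ((q : ℚ) - 1) - ∑ k ∈ S, (q : ℚ)⁻¹ ^ (k + 1) ↔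
      ∑ k ∈ S, (q : ℚ)⁻¹ ^ k = 1 + 1 / ((q : ℚ) - 1) - g := by
    have hσ : (q : ℚ) * ∑ k ∈ S, (q : ℚ)⁻¹ ^ (k + 1) = ∑ k ∈ S, (q : ℚ)⁻¹ ^ k := by
      rw [mul_sum]
      exact sum_congr rfl fun k _ => by rw [pow_succ, mul_left_comm, mul_inv_cancel₀ hq0, mul_one]
    rw [div_eq_iff hq0]
    exact ⟨fun h => by linear_combination h - hσ + hqc, fun h => by linear_combination h + hσ - hqc⟩
  simp only [mem_lubinTateExpSet_succ_iff, hscale,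
    Finset.Nat.exists_card_sum_eq_iff (fun k => (q : ℚ)⁻¹ ^ k), pow_zero]
  refine or_congr (exists_congr fun T => and_congr_right fun _ =>
    ⟨fun h => by linarith, fun h => by linarith⟩) ?_
  rcases m with _ | m
  · simp
  · simp only [mem_lubinTateExpSet_succ_iff, Nat.add_right_cancel_iff, ne_eq,
      Nat.add_one_ne_zero, not_false_eq_true, true_and]
    exact exists_congr fun T => and_congr_right fun _ =>
      ⟨fun h => by linarith, fun h => by linarith⟩

theorem coeff_lubinTateMap {F : Type*} [Field F] (p e : ℕ) [ExpChar F p] (x : HahnSeries ℚ F)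
    (g : ℚ) :
    (lubinTateMap F (p ^ e) x).coeff g = x.coeff (g / (p ^ e : ℕ)) ^ p ^ e - x.coeff (g - 1) := by
  have hq : ((p ^ e : ℕ) : ℚ) ≠ 0 := by exact_mod_cast pow_ne_zero e (expChar_ne_zero F p)
  rw [lubinTateMap, HahnSeries.coeff_sub, HahnSeries.coeff_single_mul, one_mul,
    ← HahnSeries.coeff_pow_expChar_pow_nsmul, nsmul_eq_mul, mul_div_cancel₀ _ hq]

theorem lubinTateMap_eq_of_coeff_eq_indicator {F : Type*} [Field F] (p e : ℕ) [ExpChar F p]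
    {x z : HahnSeries ℚ F} {A B : Set ℚ} (hx : x.coeff = A.indicator fun _ => 1)
    (hz : z.coeff = B.indicator fun _ => 1)
    (hAB : ∀ g : ℚ, g / (p ^ e : ℕ) ∈ A ↔ g - 1 ∈ A ∨ g ∈ B) (hdisj : ∀ g, g - 1 ∈ A → g ∉ B) :
    lubinTateMap F (p ^ e) x = z := by
  have hq : p ^ e ≠ 0 := pow_ne_zero e (expChar_ne_zero F p)
  ext g
  rw [coeff_lubinTateMap, hx, hz]
  by_cases hA : g - 1 ∈ A
  · rw [Set.indicator_of_mem hA, Set.indicator_of_mem ((hAB g).mpr (Or.inl hA)),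
      Set.indicator_of_notMem (hdisj g hA), one_pow, sub_self]
  by_cases hB : g ∈ B
  · rw [Set.indicator_of_notMem hA, Set.indicator_of_mem ((hAB g).mpr (Or.inr hB)),
      Set.indicator_of_mem hB, one_pow, sub_zero]
  · rw [Set.indicator_of_notMem hA, Set.indicator_of_notMem hB,
      Set.indicator_of_notMem fun h => ((hAB g).mp h).elim hA hB, zero_pow hq, sub_zero]

/-- Let `F` be a field of characteristic `p`, `q = p^e` with `e ≥ 1`, and let `y_n` be the Hahn
series with coefficient `1` exactly on `A_n`. Then `f^{[n]}(y_n) = 0`, `f^{[n-1]}(y_n) ≠ 0`,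
and `(f^{[n-1]}(y_n))^{q-1} = T`; i.e. `y_n` is a root of
`g_n(X) = (f^{[n-1]}(X))^{q-1} - T`, a primitive `π^n`-torsion point of the Lubin-Tate formal
module for the uniformizer `-T`. -/
theorem lubinTate_hahnSeries_primitive_torsion (p : ℕ) [Fact p.Prime] (F : Type*) [Field F]
    [CharP F p] (e : ℕ) (he : 1 ≤ e) (q : ℕ) (hq : q = p ^ e)
    (y : ℕ → HahnSeries ℚ F)
    (hy : ∀ n : ℕ, (y n).coeff = Set.indicator (lubinTateExpSet q n) fun _ => (1 : F))
    (n : ℕ) (hn : 1 ≤ n) :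
    (lubinTateMap F q)^[n] (y n) = 0 ∧
    (lubinTateMap F q)^[n - 1] (y n) ≠ 0 ∧
    ((lubinTateMap F q)^[n - 1] (y n)) ^ (q - 1) = HahnSeries.single (1 : ℚ) 1 := by
  subst hq
  have hq : 2 ≤ p ^ e := (Fact.out : p.Prime).two_le.trans (Nat.le_self_pow (by omega) p)
  have hmap (m : ℕ) {z : HahnSeries ℚ F}
      (hz : z.coeff = {g | m ≠ 0 ∧ g ∈ lubinTateExpSet (p ^ e) m}.indicator fun _ => 1) :
      lubinTateMap F (p ^ e) (y (m + 1)) = z := by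
    refine lubinTateMap_eq_of_coeff_eq_indicator p e (hy _) hz
      (div_mem_lubinTateExpSet_succ_iff hq m) fun g hg ⟨hm, hgm⟩ => ?_
    obtain ⟨k, rfl⟩ := Nat.exists_eq_succ_of_ne_zero hm
    exact notMem_lubinTateExpSet_of_sub_one_mem hq hg hgm
  have hstep (m : ℕ) : lubinTateMap F (p ^ e) (y (m + 2)) = y (m + 1) :=
    hmap (m + 1) (by rw [hy]; congr; ext; simp)
  have hiter (l : ℕ) : (lubinTateMap F (p ^ e))^[l] (y (l + 1)) = y 1 := by
    induction l with
    | zero => rfl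
    | succ l ih => rw [Function.iterate_succ_apply, hstep, ih]
  have hy1 : y 1 = HahnSeries.single (1 / ((p ^ e - 1 : ℕ) : ℚ)) 1 := by
    ext g
    simp only [hy, lubinTateExpSet_one, Set.indicator_apply, Set.mem_singleton_iff,
      HahnSeries.coeff_single, Nat.cast_pred (by omega : 0 < p ^ e)]
    congr
  obtain ⟨l, rfl⟩ : ∃ l, n = l + 1 := ⟨n - 1, by omega⟩
  rw [Nat.add_sub_cancel, hiter, hy1]
  refine ⟨?_, HahnSeries.single_ne_zero one_ne_zero, HahnSeries.single_div_pow (by omega) 1⟩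
  rw [Function.iterate_succ_apply', hiter, hmap 0 (z := 0) (by ext; simp)]

end
end
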